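/- Let X be a pre-Riesz space and let P and Q be band projections on X. Then: (a) P leaves the range of Q invariant, i.e. P(QX) ⊆ QX; (b) P and Q commute, i.e. PQ = QP; (c) the composition PQ is again a band projection; (d) the range of PQ equals PX ∩ QX. -/

import Mathlib

open Pointwise

variable {X : Type*} [AddCommGroup X] [PartialOrder X] [IsOrderedAddMonoid X] [Module ℝ X]
    [PosSMulStrictMono ℝ X] [PosSMulReflectLT ℝ X]

/-- Two elements of an ordered vector space are disjoint if the sets `{x+y, -x-y}` and
`{x-y, y-x}` have the same set of upper bounds. -/
def UDisjoint (x y : X) : Prop :=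
  upperBounds ({x + y, -x - y} : Set X) = upperBounds ({x - y, y - x} : Set X)

/-- The disjoint complement `S^⊥` of a set `S`. -/
def dComp (S : Set X) : Set X := {x : X | ∀ s ∈ S, UDisjoint x s}

/-- A band: a set equal to its double disjoint complement. -/
def IsBand (B : Set X) : Prop := B = dComp (dComp B)

/-- A projection band: a band `B` with `B ∩ B^⊥ = {0}` and `B + B^⊥ = X`. -/
def IsProjBand (B : Set X) : Prop :=
  IsBand B ∧ B ∩ dComp B = {0} ∧ ∀ x : X, ∃ b ∈ B, ∃ c ∈ dComp B, x = b + c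

/-- A positive linear operator. -/
def IsPosMap (T : X →ₗ[ℝ] X) : Prop := ∀ x : X, 0 ≤ x → 0 ≤ T x

/-- A band projection: a linear projection whose range is a projection band and whose
kernel is the disjoint complement of the range. -/
def IsBandProj (P : X →ₗ[ℝ] X) : Prop :=
  P ∘ₗ P = P ∧ IsProjBand (Set.range ⇑P) ∧ (LinearMap.ker P : Set X) = dComp (Set.range ⇑P)

/-- A pre-Riesz space: for every nonempty finite `A ⊆ X` and every `x`, if the upper bounds
of `x + A` are contained in the upper bounds of `A`, then `x ≥ 0`. -/
def IsPreRiesz (X : Type*) [AddCommGroup X] [PartialOrder X] [IsOrderedAddMonoid X] [Module ℝ X]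
    [PosSMulStrictMono ℝ X] [PosSMulReflectLT ℝ X] : Prop :=
  ∀ (A : Set X) (x : X), A.Finite → A.Nonempty →
    upperBounds ((x + ·) '' A) ⊆ upperBounds A → 0 ≤ x

/-! Write a band projection as a projection `R` with `0 ≤ R x ≤ x` for `x ≥ 0`. The heart of the
matter is that in a pre-Riesz space such an `R` preserves disjointness: `y ⊥ s` implies `R y ⊥ s`.
For this, the pre-Riesz property is applied to the two-point set `{y - s, -(y + s)}`, and upper
bounds are compared componentwise along `X = R X + (I - R) X`. Hence `P` leaves every disjoint
complement invariant, in particular the band `QX = (QX)^⊥⊥` and `ker Q = (QX)^⊥`, so `P` commutes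
with `Q`. Then `PQ` is again such a projection, hence a band projection, with range `PX ∩ QX`. -/

section Disjoint

variable {E : Type*} [AddCommGroup E] [PartialOrder E] {x y : E}

lemma udisjoint_iff :
    UDisjoint x y ↔ ∀ u, (x + y ≤ u ∧ -(x + y) ≤ u ↔ x - y ≤ u ∧ -(x - y) ≤ u) := by
  simp only [UDisjoint, Set.ext_iff, upperBounds_insert, upperBounds_singleton, Set.mem_inter_iff,
    Set.mem_Ici, neg_add', neg_sub]

lemma UDisjoint.symm (h : UDisjoint x y) : UDisjoint y x := by
  rw [udisjoint_iff] at h ⊢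
  intro u
  rw [add_comm, ← neg_sub, neg_neg, and_comm (a := -(x - y) ≤ u)]
  exact h u

lemma UDisjoint.neg_right (h : UDisjoint x y) : UDisjoint x (-y) := by
  rw [udisjoint_iff] at h ⊢
  intro u
  rw [← sub_eq_add_neg, sub_neg_eq_add]
  exact (h u).symm

lemma UDisjoint.neg_left (h : UDisjoint x y) : UDisjoint (-x) y :=
  h.symm.neg_right.symm

lemma subset_dComp_dComp (S : Set E) : S ⊆ dComp (dComp S) :=
  fun s hs _ hx => (hx s hs).symm

variable [IsOrderedAddMonoid E] [Module ℝ E]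

lemma eq_zero_of_udisjoint_self (h : UDisjoint x x) : x = 0 := by
  have h0 := ((udisjoint_iff.1 h) 0).2 (by simp)
  have hxx : x + x = 0 := le_antisymm h0.1 (neg_nonpos.1 h0.2)
  simpa [← two_smul ℝ x] using hxx

lemma UDisjoint.nonneg_of_add_nonneg [PosSMulMono ℝ E] (h : UDisjoint x y) (hxy : 0 ≤ x + y) :
    0 ≤ x ∧ 0 ≤ y := by
  have half_nonneg : ∀ z : E, 0 ≤ z + z → 0 ≤ z := fun z hz => by
    simpa [smul_smul, ← two_smul ℝ z] using smul_nonneg (by norm_num : (0 : ℝ) ≤ 1 / 2) hz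
  have h' := (udisjoint_iff.1 h (x + y)).1 ⟨le_rfl, (neg_nonpos.2 hxy).trans hxy⟩
  refine ⟨half_nonneg x ?_, half_nonneg y ?_⟩
  · simpa only [show x + y - -(x - y) = x + x by abel] using sub_nonneg.2 h'.2
  · simpa only [show x + y - (x - y) = y + y by abel] using sub_nonneg.2 h'.1

end Disjoint

lemma IsPreRiesz.nonneg_of_forall_le (hX : IsPreRiesz X) {x a b : X}
    (h : ∀ u, x + a ≤ u → x + b ≤ u → a ≤ u ∧ b ≤ u) : 0 ≤ x := by
  refine hX {a, b} x (Set.toFinite _) (Set.insert_nonempty _ _) fun u hu => ?_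
  simp only [Set.image_insert_eq, Set.image_singleton, upperBounds_insert, upperBounds_singleton,
    Set.mem_inter_iff, Set.mem_Ici] at hu ⊢
  exact h u hu.1 hu.2

lemma le_of_apply_le_of_sub_apply_le {E : Type*} [AddCommGroup E] [PartialOrder E]
    [IsOrderedAddMonoid E] (f : E → E) {a b : E} (h₁ : f a ≤ f b) (h₂ : a - f a ≤ b - f b) :
    a ≤ b := by
  simpa using add_le_add h₁ h₂

structure IsPosProj {E : Type*} [AddCommGroup E] [PartialOrder E] [Module ℝ E]
    (R : E →ₗ[ℝ] E) : Prop where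
  map_map : ∀ x, R (R x) = R x
  nonneg : ∀ x, 0 ≤ x → 0 ≤ R x
  le_self : ∀ x, 0 ≤ x → R x ≤ x

namespace IsPosProj

section

variable {E : Type*} [AddCommGroup E] [PartialOrder E] [IsOrderedAddMonoid E] [Module ℝ E]
  {R : E →ₗ[ℝ] E} {a b : E}

lemma mono (hR : IsPosProj R) (h : a ≤ b) : R a ≤ R b := by
  simpa using hR.nonneg _ (sub_nonneg.2 h)

lemma compl_mono (hR : IsPosProj R) (h : a ≤ b) : a - R a ≤ b - R b := by
  have := hR.le_self _ (sub_nonneg.2 h)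
  rw [map_sub, sub_le_sub_iff] at this
  rwa [sub_le_sub_iff, add_comm]

lemma compl (hR : IsPosProj R) : IsPosProj (LinearMap.id - R) where
  map_map x := by simp [hR.map_map]
  nonneg x hx := by simpa using hR.le_self x hx
  le_self x hx := by simpa using hR.nonneg x hx

lemma comp {S : E →ₗ[ℝ] E} (hR : IsPosProj R) (hS : IsPosProj S) (h : R ∘ₗ S = S ∘ₗ R) :
    IsPosProj (R ∘ₗ S) where
  map_map x := by
    simp only [LinearMap.comp_apply]
    rw [← LinearMap.comp_apply S R, ← h, LinearMap.comp_apply, hS.map_map, hR.map_map]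
  nonneg x hx := hR.nonneg _ (hS.nonneg x hx)
  le_self x hx := (hR.mono (hS.le_self x hx)).trans (hR.le_self x hx)

lemma udisjoint_of_apply_eq_zero_of_apply_eq_self (hR : IsPosProj R) {x w : E} (hx : R x = 0)
    (hw : R w = w) : UDisjoint x w := by
  have le_iff : ∀ a u : E, a ≤ u ↔ R a ≤ R u ∧ a - R a ≤ u - R u := fun a u =>
    ⟨fun h => ⟨hR.mono h, hR.compl_mono h⟩, fun h => le_of_apply_le_of_sub_apply_le R h.1 h.2⟩
  rw [udisjoint_iff]
  intro u
  simp only [le_iff _ u, map_add, map_sub, map_neg, hx, hw]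
  abel_nf
  tauto

end

variable {R : X →ₗ[ℝ] X}

lemma apply_sub_le_of_udisjoint (hX : IsPreRiesz X) (hR : IsPosProj R) {y s t : X}
    (h : UDisjoint y s) (h₁ : R y + s ≤ t) (h₂ : -(R y + s) ≤ t) : R y - s ≤ t := by
  rw [← sub_nonneg]
  refine hX.nonneg_of_forall_le (a := y - s) (b := -(y + s)) fun u hu₁ hu₂ => ?_
  have hu₁' : t + (y - R y) ≤ u := by convert hu₁ using 1; abel
  have hu₂' : t - R y - y ≤ u := by convert hu₂ using 1; abel
  have hpos : y + s ≤ u := calc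
    y + s = (R y + s) + (y - R y) := by abel
    _ ≤ t + (y - R y) := by gcongr
    _ ≤ u := hu₁'
  have hneg : -(y + s) ≤ u := by
    refine le_of_apply_le_of_sub_apply_le R ?_ ?_
    · calc R (-(y + s)) = R (-(R y + s)) := by simp [hR.map_map]
        _ ≤ R t := hR.mono h₂
        _ = R (t + (y - R y)) := by simp [hR.map_map]
        _ ≤ R u := hR.mono hu₁'
    · calc -(y + s) - R (-(y + s)) = (-(R y + s) - R (-(R y + s))) - (y - R y) := by
            simp only [map_neg, map_add, hR.map_map]; abel
        _ ≤ (t - R t) - (y - R y) := sub_le_sub_right (hR.compl_mono h₂) _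
        _ = (t - R y - y) - R (t - R y - y) := by simp only [map_sub, hR.map_map]; abel
        _ ≤ u - R u := hR.compl_mono hu₂'
  exact ⟨((udisjoint_iff.1 h u).1 ⟨hpos, hneg⟩).1, hneg⟩

lemma udisjoint_apply (hX : IsPreRiesz X) (hR : IsPosProj R) {y s : X} (h : UDisjoint y s) :
    UDisjoint (R y) s := by
  have key : ∀ {y s t : X}, UDisjoint y s → R y + s ≤ t ∧ -(R y + s) ≤ t →
      R y - s ≤ t ∧ -(R y - s) ≤ t := fun {y s t} h ⟨h₁, h₂⟩ => by
    refine ⟨hR.apply_sub_le_of_udisjoint hX h h₁ h₂, ?_⟩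
    have := hR.apply_sub_le_of_udisjoint hX h.neg_left.neg_right (t := t)
      (by rwa [map_neg, ← neg_add]) (by rwa [map_neg, ← neg_add, neg_neg])
    rwa [map_neg, sub_neg_eq_add, neg_add_eq_sub, ← neg_sub] at this
  rw [udisjoint_iff]
  intro t
  refine ⟨key h, fun ht => ?_⟩
  simpa only [← sub_eq_add_neg, sub_neg_eq_add] using key h.neg_right (t := t)
    (by simpa only [← sub_eq_add_neg] using ht)

lemma mem_dComp (hX : IsPreRiesz X) (hR : IsPosProj R) {S : Set X} {x : X} (hx : x ∈ dComp S) :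
    R x ∈ dComp S :=
  fun s hs => hR.udisjoint_apply hX (hx s hs)

lemma ker_eq_dComp_range (hX : IsPreRiesz X) (hR : IsPosProj R) :
    (LinearMap.ker R : Set X) = dComp (Set.range R) := by
  ext x
  refine ⟨fun hx w ⟨z, hz⟩ => ?_, fun hx => ?_⟩
  · exact hR.udisjoint_of_apply_eq_zero_of_apply_eq_self hx (hz ▸ hR.map_map z)
  · exact eq_zero_of_udisjoint_self (hR.udisjoint_apply hX (hx (R x) ⟨x, rfl⟩))

lemma sub_apply_mem_dComp_range (hX : IsPreRiesz X) (hR : IsPosProj R) (x : X) :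
    x - R x ∈ dComp (Set.range R) := by
  rw [← hR.ker_eq_dComp_range hX]
  simp [hR.map_map]

lemma isBand_range (hX : IsPreRiesz X) (hR : IsPosProj R) : IsBand (Set.range R) := by
  refine (subset_dComp_dComp _).antisymm fun x hx => ⟨x, ?_⟩
  have := hR.compl.udisjoint_apply hX (hx _ (hR.sub_apply_mem_dComp_range hX x))
  exact (sub_eq_zero.1 (by simpa using eq_zero_of_udisjoint_self this)).symm

lemma isBandProj (hX : IsPreRiesz X) (hR : IsPosProj R) : IsBandProj R := by
  refine ⟨LinearMap.ext hR.map_map, ⟨hR.isBand_range hX, ?_, fun x => ?_⟩,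
    hR.ker_eq_dComp_range hX⟩
  · refine Set.eq_singleton_iff_unique_mem.2 ⟨⟨⟨0, map_zero R⟩, ?_⟩, fun x hx => ?_⟩
    · simpa using hR.sub_apply_mem_dComp_range hX 0
    · exact eq_zero_of_udisjoint_self (hx.2 x hx.1)
  · exact ⟨R x, ⟨x, rfl⟩, x - R x, hR.sub_apply_mem_dComp_range hX x, by abel⟩

end IsPosProj

lemma IsBandProj.isPosProj {E : Type*} [AddCommGroup E] [PartialOrder E] [IsOrderedAddMonoid E]
    [Module ℝ E] [PosSMulMono ℝ E] {P : E →ₗ[ℝ] E} (hP : IsBandProj P) : IsPosProj P := by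
  have map_map : ∀ x, P (P x) = P x := LinearMap.congr_fun hP.1
  have key : ∀ x, 0 ≤ x → 0 ≤ P x ∧ P x ≤ x := by
    intro x hx
    obtain ⟨_, ⟨z, rfl⟩, c, hc, rfl⟩ := hP.2.1.2.2 x
    have hPc : P c = 0 := by
      rw [← LinearMap.mem_ker, ← SetLike.mem_coe, hP.2.2]
      exact hc
    obtain ⟨hb, hc⟩ := (hc _ ⟨z, rfl⟩).symm.nonneg_of_add_nonneg hx
    rw [map_add, map_map, hPc, add_zero]
    exact ⟨hb, le_add_of_nonneg_right hc⟩
  exact ⟨map_map, fun x hx => (key x hx).1, fun x hx => (key x hx).2⟩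

/-- Interaction of two band projections. -/
theorem stmt_5 (hX : IsPreRiesz X) (P Q : X →ₗ[ℝ] X)
    (hP : IsBandProj P) (hQ : IsBandProj Q) :
    (∀ y ∈ Set.range ⇑Q, P y ∈ Set.range ⇑Q) ∧
    P ∘ₗ Q = Q ∘ₗ P ∧
    IsBandProj (P ∘ₗ Q) ∧
    Set.range ⇑(P ∘ₗ Q) = Set.range ⇑P ∩ Set.range ⇑Q := by
  have hP' := hP.isPosProj
  have hQ' := hQ.isPosProj
  have hrange : ∀ y ∈ Set.range ⇑Q, P y ∈ Set.range ⇑Q := by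
    rw [hQ.2.1.1]
    exact fun y hy => hP'.mem_dComp hX hy
  have hker : ∀ y ∈ LinearMap.ker Q, P y ∈ LinearMap.ker Q := by
    simp_rw [← SetLike.mem_coe, hQ.2.2]
    exact fun y hy => hP'.mem_dComp hX hy
  have hcomm : P ∘ₗ Q = Q ∘ₗ P :=
    ((LinearMap.IsIdempotentElem.commute_iff hQ.1).2 ⟨fun y hy => hrange y hy, hker⟩).eq.symm
  refine ⟨hrange, hcomm, (hP'.comp hQ' hcomm).isBandProj hX, ?_⟩
  ext x
  constructor
  · rintro ⟨z, rfl⟩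
    exact ⟨⟨Q z, rfl⟩, ⟨P z, by rw [hcomm]; rfl⟩⟩
  · rintro ⟨⟨z, rfl⟩, ⟨w, hw⟩⟩
    exact ⟨P z, by rw [LinearMap.comp_apply, ← hw, hQ'.map_map, hw, hP'.map_map]⟩
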